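/- In the abstract perturbation setting, suppose that ‖U‖ ≤ 1, that the operator FγA^{-1/2} : 𝔥 → 𝔊 is compact, and that for some θ > 0 the singular number bound n^sup(FγA^{-1}, 2θ) = 𝔪 < ∞ holds. Then the resolvent difference R_V = A^{-1} − (A_V)^{-1} satisfies n^sup(R_V, θ) ≤ 2𝔪. -/

import Mathlib

open scoped ENNReal NNReal
open Filter MeasureTheory Topology

noncomputable section

namespace SingPert

/-! ### Spectral counting functions.

For a compact operator `K`, `snCount K lam` is the number of singular values of `K`
exceeding `lam` (expressed through the variational / Glazman characterization:
the maximal dimension of a subspace on which `‖K x‖ > lam * ‖x‖`), and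
`evCount K lam` is the number of eigenvalues of a compact self-adjoint `K`
exceeding `lam` (maximal dimension of a subspace on which `⟪K x, x⟫ > lam ‖x‖²`).
`nsup K θ = limsup_{lam → 0+} lam ^ θ * n(lam, K)` and `nsupPos`, `nsupNeg` are the
corresponding asymptotic characteristics for positive/negative eigenvalues. -/

section Counting

variable {H : Type*} {G : Type*}
  [NormedAddCommGroup H] [InnerProductSpace ℂ H]
  [NormedAddCommGroup G] [InnerProductSpace ℂ G]

/-- Distribution function of singular values (variational characterization). -/
def snCount (K : H →L[ℂ] G) (lam : ℝ) : ℝ≥0∞ :=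
  ⨆ (p : Submodule ℂ H) (_ : ∀ x ∈ p, x ≠ 0 → lam * ‖x‖ < ‖K x‖),
    (Module.finrank ℂ ↥p : ℝ≥0∞)

/-- `n^sup(K, θ) = limsup_{λ→0+} λ^θ n(λ, K)` for singular values. -/
def nsup (K : H →L[ℂ] G) (θ : ℝ) : ℝ≥0∞ :=
  Filter.limsup (fun lam : ℝ => ENNReal.ofReal (lam ^ θ) * snCount K lam) (𝓝[>] (0:ℝ))

/-- Distribution function of positive eigenvalues of a self-adjoint operator
(variational characterization). -/
def evCount (K : H →L[ℂ] H) (lam : ℝ) : ℝ≥0∞ :=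
  ⨆ (p : Submodule ℂ H) (_ : ∀ x ∈ p, x ≠ 0 → lam * ‖x‖ ^ 2 < (inner ℂ (K x) x : ℂ).re),
    (Module.finrank ℂ ↥p : ℝ≥0∞)

/-- `n^sup_+(K, θ) = limsup_{λ→0+} λ^θ n_+(λ, K)`. -/
def nsupPos (K : H →L[ℂ] H) (θ : ℝ) : ℝ≥0∞ :=
  Filter.limsup (fun lam : ℝ => ENNReal.ofReal (lam ^ θ) * evCount K lam) (𝓝[>] (0:ℝ))

/-- `n^sup_-(K, θ) = limsup_{λ→0+} λ^θ n_-(λ, K)`. -/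
def nsupNeg (K : H →L[ℂ] H) (θ : ℝ) : ℝ≥0∞ := nsupPos (-K) θ

end Counting

/-! ### The abstract perturbation setting.

`A ≥ c₀ > 0` is a positive self-adjoint operator in the Hilbert space `H` with form
domain `𝔥¹ = D(A^{1/2})`, which is identified isometrically with `H` through the map
`u = A^{-1/2} v`.  All objects of the setting are encoded through the bounded
operators appearing after this identification:
* `sqrtAinv` is the bounded operator `A^{-1/2}` (self-adjoint, injective, with
  `‖A^{-1/2} f‖² ≤ c₀⁻¹ ‖f‖²`, which expresses `A ≥ c₀`);
* `S = F ∘ γ ∘ A^{-1/2} : H → G` is the bounded composite of the boundary operator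
  `γ : 𝔥¹ → G` and the operator `F` (whose domain contains `γ 𝔥¹`);
* `U` is a bounded self-adjoint operator in `G`;
* the perturbing quadratic form is `v[u] = (U F γ u, F γ u)_G`, i.e. after the
  substitution `u = A^{-1/2} f` it is `f ↦ ⟪U (S f), S f⟫`, and the positivity
  assumption `a[u] + v[u] ≥ c·a[u]` becomes `‖f‖² + re ⟪U (S f), S f⟫ ≥ c ‖f‖²`;
* `T = (F γ A^{-1/2})^* U (F γ A^{-1/2})` is the Birman–Schwinger operator;
* `A_V` is the self-adjoint operator defined by the closed quadratic form
  `a[u] + v[u]`; variationally, `u = A_V^{-1} h ∈ 𝔥¹` is characterized by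
  `a(u,w) + v(u,w) = (h, w)_H` for all `w ∈ 𝔥¹`, which after the substitution
  `u = A^{-1/2}(X h)`, `w = A^{-1/2} g` reads `(1 + T) X = A^{-1/2}` together with
  `A_V^{-1} = A^{-1/2} X`.  The fields `X`, `hX`, `AVinv`, `hAVinv` encode exactly
  this variational characterization. -/

section Abstract

variable (H : Type*) (G : Type*)
  [NormedAddCommGroup H] [InnerProductSpace ℂ H] [CompleteSpace H]
  [NormedAddCommGroup G] [InnerProductSpace ℂ G] [CompleteSpace G]

/-- The unperturbed positive self-adjoint operator `A ≥ c₀ > 0`, encoded through its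
bounded inverse square root `A^{-1/2}`. -/
structure BasePerturbation where
  sqrtAinv : H →L[ℂ] H
  sqrtAinv_sa : IsSelfAdjoint sqrtAinv
  sqrtAinv_inj : Function.Injective sqrtAinv
  c₀ : ℝ
  c₀_pos : 0 < c₀
  lower_bound : ∀ f : H, ‖sqrtAinv f‖ ^ 2 ≤ c₀⁻¹ * ‖f‖ ^ 2

variable {H G}

/-- A perturbation `V` of `A` in the abstract setting, together with the perturbed
operator `A_V` (encoded through its bounded inverse) and the Birman–Schwinger
operator `T`. -/
structure PerturbationData (B : BasePerturbation H) where
  /-- `S = F γ A^{-1/2}`, a bounded operator from `H` to `G`. -/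
  S : H →L[ℂ] G
  /-- The bounded self-adjoint operator `U` in `G`. -/
  U : G →L[ℂ] G
  U_sa : IsSelfAdjoint U
  /-- The Birman–Schwinger operator `T = (F γ A^{-1/2})^* U (F γ A^{-1/2})`. -/
  T : H →L[ℂ] H
  hT : T = (ContinuousLinearMap.adjoint S).comp (U.comp S)
  /-- positivity of the perturbed quadratic form: `a[u] + v[u] ≥ c a[u]`. -/
  pos : ∃ c : ℝ, 0 < c ∧ ∀ f : H, c * ‖f‖ ^ 2 ≤ ‖f‖ ^ 2 + (inner ℂ (U (S f)) (S f) : ℂ).re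
  /-- `X = A^{1/2} A_V^{-1}`. -/
  X : H →L[ℂ] H
  /-- the variational characterization of `A_V`: `(1 + T) X = A^{-1/2}`. -/
  hX : ((1 : H →L[ℂ] H) + T).comp X = B.sqrtAinv
  /-- the bounded inverse of the perturbed operator `A_V`. -/
  AVinv : H →L[ℂ] H
  hAVinv : AVinv = B.sqrtAinv.comp X

end Abstract

/-!
By the resolvent identity, `R_V = L† (U - C) L` with `L = F γ A^{-1}` and `C` compact. Cutting
off from `L` a subspace of dimension `n(μ, L)` (on whose complement `‖L‖ ≤ μ`) and from `C` one of
dimension `n(ε, C)` leaves an operator of norm `≤ (1 + ε) μ²`, so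
`n((1 + ε) μ², R_V) ≤ 2 n(μ, L) + n(ε, C)`. Multiplied by `((1 + ε) μ²)^θ`, the finite term
`n(ε, C)` vanishes as `μ → 0`, giving `n^sup(R_V, θ) ≤ 2 (1 + ε)^θ 𝔪` for every `ε > 0`.
-/

section SingularValueCounting

open Metric

variable {H G : Type*} [NormedAddCommGroup H] [InnerProductSpace ℂ H]
  [NormedAddCommGroup G] [InnerProductSpace ℂ G]

lemma finrank_le_snCount {K : H →L[ℂ] G} {lam : ℝ} {p : Submodule ℂ H}
    (hp : ∀ x ∈ p, x ≠ 0 → lam * ‖x‖ < ‖K x‖) :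
    (Module.finrank ℂ p : ℝ≥0∞) ≤ snCount K lam :=
  le_iSup₂_of_le p hp le_rfl

lemma snCount_le_finrank_of_sub_mem {R K : H →L[ℂ] G} {lam : ℝ} (W : Submodule ℂ G)
    [FiniteDimensional ℂ W] (hK : ‖K‖ ≤ lam) (hRK : ∀ x, R x - K x ∈ W) :
    snCount R lam ≤ Module.finrank ℂ W := by
  refine iSup₂_le fun p hp => ?_
  let f : p →ₗ[ℂ] W := ((R - K).toLinearMap ∘ₗ p.subtype).codRestrict W fun x => hRK x
  have hf : Function.Injective f := by
    rw [← LinearMap.ker_eq_bot, LinearMap.ker_eq_bot']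
    intro x hx
    by_contra hx0
    have hRx : R x = K x := sub_eq_zero.mp (congrArg Subtype.val hx)
    have := hp x x.2 (by simpa using hx0)
    rw [hRx] at this
    exact (K.le_of_opNorm_le hK x).not_gt this
  exact_mod_cast LinearMap.finrank_le_finrank_of_injective hf

lemma _root_.IsCompact.packingNumber_ne_top {E : Type*} [PseudoEMetricSpace E] {K : Set E}
    (hK : IsCompact K) {ε : ℝ≥0} (hε : ε ≠ 0) : packingNumber ε K ≠ ⊤ := by
  obtain ⟨N, -, hNfin, hN⟩ :=
    exists_finite_isCover_of_isCompact (ε := ε / 2) (by simpa using hε) hK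
  have hle := (packingNumber_two_mul_le_externalCoveringNumber (ε / 2) K).trans
    hN.externalCoveringNumber_le_encard
  rw [mul_div_cancel₀ _ two_ne_zero] at hle
  exact ne_top_of_le_ne_top hNfin.encard_lt_top.ne hle

/-- `K` maps an orthonormal basis of `p` to an `ε`-separated set, as orthonormal vectors are at
distance `√2 ≥ 1`. -/
lemma finrank_le_packingNumber {K : H →L[ℂ] G} {ε : ℝ} (hε : 0 < ε) {S : Set G}
    (hS : K '' closedBall 0 1 ⊆ S) {p : Submodule ℂ H} [FiniteDimensional ℂ p]
    (hp : ∀ x ∈ p, x ≠ 0 → ε * ‖x‖ < ‖K x‖) :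
    (Module.finrank ℂ p : ℕ∞) ≤ packingNumber ε.toNNReal S := by
  let b := stdOrthonormalBasis ℂ p
  have hb : ∀ i, ‖(b i : H)‖ = 1 := fun i => b.orthonormal.1 i
  have hsep : ∀ i j, i ≠ j → ε < dist (K (b i)) (K (b j)) := by
    intro i j hij
    have hsq : ‖(b i : H) - b j‖ ^ 2 = 2 := by
      have hinner : inner ℂ (b i : H) (b j : H) = 0 := b.orthonormal.2 hij
      rw [@norm_sub_sq ℂ, hinner, hb, hb]
      norm_num
    have hne : (b i : H) - b j ≠ 0 := fun h => by simp [h] at hsq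
    have hone : 1 ≤ ‖(b i : H) - b j‖ := by nlinarith [norm_nonneg ((b i : H) - b j)]
    rw [dist_eq_norm, ← map_sub]
    calc ε ≤ ε * ‖(b i : H) - b j‖ := le_mul_of_one_le_right hε.le hone
      _ < ‖K ((b i : H) - b j)‖ := hp _ (sub_mem (b i).2 (b j).2) hne
  have hinj : Function.Injective fun i => K (b i) := fun i j hij => by
    by_contra hne
    have := hsep i j hne
    simp only [hij, dist_self] at this
    linarith
  have hsub : Set.range (fun i => K (b i)) ⊆ S := by
    rintro _ ⟨i, rfl⟩
    exact hS ⟨b i, by simp [hb i], rfl⟩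
  have hsep' : IsSeparated (ε.toNNReal : ℝ≥0∞) (Set.range fun i => K (b i)) := by
    rintro _ ⟨i, rfl⟩ _ ⟨j, rfl⟩ hij
    change ENNReal.ofReal ε < _
    rw [edist_dist, ENNReal.ofReal_lt_ofReal_iff_of_nonneg hε.le]
    exact hsep i j fun h => hij (by rw [h])
  calc (Module.finrank ℂ p : ℕ∞) ≤ (Set.range fun i => K (b i)).encard := by
        simpa using hinj.encard_range
    _ ≤ _ := hsep'.encard_le_packingNumber hsub

lemma snCount_ne_top_of_isCompactOperator {K : H →L[ℂ] G} (hK : IsCompactOperator K)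
    {ε : ℝ} (hε : 0 < ε) : snCount K ε ≠ ⊤ := by
  have hcpt : IsCompact (closure (K '' closedBall 0 1)) := by
    simpa using hK.isCompact_closure_image_closedBall 1
  obtain ⟨N, hN⟩ := ENat.ne_top_iff_exists.mp <|
    hcpt.packingNumber_ne_top (ε := ε.toNNReal) (by simpa using hε)
  refine ne_top_of_le_ne_top (ENNReal.natCast_ne_top N) (iSup₂_le fun p hp => ?_)
  by_cases hp_fin : FiniteDimensional ℂ p
  · have := finrank_le_packingNumber hε subset_closure hp
    rw [← hN] at this
    exact_mod_cast this
  · simp [Module.finrank_of_infinite_dimensional hp_fin]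

end SingularValueCounting

section PositiveSubspaces

open ContinuousLinearMap

variable {H G : Type*} [NormedAddCommGroup H] [InnerProductSpace ℂ H]
  [NormedAddCommGroup G] [InnerProductSpace ℂ G]

def IsPosDefOn (A : H →L[ℂ] H) (p : Submodule ℂ H) : Prop :=
  ∀ x ∈ p, x ≠ 0 → 0 < (inner ℂ (A x) x).re

lemma IsPosDefOn.sup_span_singleton {A : H →L[ℂ] H} (hA : (A : H →ₗ[ℂ] H).IsSymmetric)
    {p : Submodule ℂ H} (hp : IsPosDefOn A p) {z : H}
    (hz : z ∈ (p.map (A : H →ₗ[ℂ] H))ᗮ) (hAz : 0 < (inner ℂ (A z) z).re) :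
    IsPosDefOn A (p ⊔ ℂ ∙ z) := by
  intro x hx hx0
  obtain ⟨y, hy, w, hw, rfl⟩ := Submodule.mem_sup.mp hx
  obtain ⟨t, rfl⟩ := Submodule.mem_span_singleton.mp hw
  have hyz : inner ℂ (A y) z = 0 :=
    Submodule.inner_right_of_mem_orthogonal (Submodule.mem_map_of_mem hy) hz
  have hzy : inner ℂ (A z) y = 0 := by
    have hsymm : inner ℂ (A y) z = inner ℂ y (A z) := hA y z
    rw [← inner_conj_symm, ← hsymm, hyz, map_zero]
  have hexp : (inner ℂ (A (y + t • z)) (y + t • z)).re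
      = (inner ℂ (A y) y).re + Complex.normSq t * (inner ℂ (A z) z).re := by
    simp only [map_add, map_smul, inner_add_left, inner_add_right, inner_smul_left,
      inner_smul_right, hyz, hzy, mul_zero, add_zero, zero_add]
    rw [← mul_assoc, Complex.mul_conj, Complex.add_re, Complex.re_ofReal_mul]
  have hAy : 0 ≤ (inner ℂ (A y) y).re := by
    rcases eq_or_ne y 0 with rfl | hy0
    · simp
    · exact (hp y hy hy0).le
  rw [hexp]
  rcases eq_or_ne t 0 with rfl | ht
  · simpa using hp y hy (by simpa using hx0)
  · have := Complex.normSq_pos.mpr ht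
    positivity

lemma exists_isPosDefOn_forall_finrank_le {A : H →L[ℂ] H} {N : ℕ}
    (hN : ∀ p, IsPosDefOn A p → Module.finrank ℂ p ≤ N) :
    ∃ p, IsPosDefOn A p ∧ FiniteDimensional ℂ p ∧
      ∀ q, IsPosDefOn A q → FiniteDimensional ℂ q → Module.finrank ℂ q ≤ Module.finrank ℂ p := by
  classical
  let Good : ℕ → Prop := fun n =>
    ∃ p, IsPosDefOn A p ∧ FiniteDimensional ℂ p ∧ Module.finrank ℂ p = n
  have hbot : Good 0 := ⟨⊥, fun x hx hx0 => absurd ((Submodule.mem_bot ℂ).mp hx) hx0,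
    inferInstance, finrank_bot ℂ H⟩
  obtain ⟨p, hp, hp_fin, hp_rank⟩ := Nat.findGreatest_spec N.zero_le hbot
  refine ⟨p, hp, hp_fin, fun q hq hq_fin => hp_rank ▸ Nat.le_findGreatest (hN q hq) ?_⟩
  exact ⟨q, hq, hq_fin, rfl⟩

lemma re_inner_adjoint_comp_sub_smul_one [CompleteSpace H] [CompleteSpace G]
    (X : H →L[ℂ] G) (μ : ℝ) (x : H) :
    (inner ℂ ((adjoint X ∘L X - ((μ ^ 2 : ℝ) : ℂ) • 1) x) x).re = ‖X x‖ ^ 2 - μ ^ 2 * ‖x‖ ^ 2 := by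
  simp only [sub_apply, comp_apply, smul_apply, one_apply_eq_self, inner_sub_left, inner_smul_left,
    adjoint_inner_left, Complex.conj_ofReal, Complex.sub_re, Complex.re_ofReal_mul,
    inner_self_eq_norm_sq_to_K]
  norm_cast

lemma mul_norm_lt_norm_apply_iff [CompleteSpace H] [CompleteSpace G] (X : H →L[ℂ] G) {μ : ℝ}
    (hμ : 0 ≤ μ) (x : H) :
    μ * ‖x‖ < ‖X x‖ ↔ 0 < (inner ℂ ((adjoint X ∘L X - ((μ ^ 2 : ℝ) : ℂ) • 1) x) x).re := by
  rw [re_inner_adjoint_comp_sub_smul_one, sub_pos, ← mul_pow]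
  exact (pow_lt_pow_iff_left₀ (by positivity) (norm_nonneg _) two_ne_zero).symm

/-- `V` is the image under `X†X - μ²` of a maximal subspace on which `‖X x‖ > μ ‖x‖`. -/
lemma exists_finrank_le_snCount_norm_comp_starProjection_le [CompleteSpace H] [CompleteSpace G]
    (X : H →L[ℂ] G) {μ : ℝ} (hμ : 0 < μ) (hX : snCount X μ ≠ ⊤) :
    ∃ V : Submodule ℂ H, FiniteDimensional ℂ V ∧ (Module.finrank ℂ V : ℝ≥0∞) ≤ snCount X μ ∧
      ‖X ∘L Vᗮ.starProjection‖ ≤ μ := by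
  set A := adjoint X ∘L X - ((μ ^ 2 : ℝ) : ℂ) • 1
  have hA : (A : H →ₗ[ℂ] H).IsSymmetric := fun u v => by
    simp [A, inner_sub_left, inner_sub_right, inner_smul_left, inner_smul_right,
      adjoint_inner_left, adjoint_inner_right]
  have hgood : ∀ p, IsPosDefOn A p ↔ ∀ x ∈ p, x ≠ 0 → μ * ‖x‖ < ‖X x‖ := fun p =>
    forall₂_congr fun x _ => imp_congr_right fun _ => (mul_norm_lt_norm_apply_iff X hμ.le x).symm
  obtain ⟨N, hN⟩ := ENNReal.exists_nat_gt hX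
  obtain ⟨p, hp, hp_fin, hp_max⟩ := exists_isPosDefOn_forall_finrank_le (A := A) (N := N)
    fun q hq => by exact_mod_cast ((finrank_le_snCount ((hgood q).mp hq)).trans_lt hN).le
  let V := p.map (A : H →ₗ[ℂ] H)
  have hV : ∀ z ∈ Vᗮ, ‖X z‖ ≤ μ * ‖z‖ := by
    intro z hz
    by_contra! hz_lt
    have hAz : 0 < (inner ℂ (A z) z).re := (mul_norm_lt_norm_apply_iff X hμ.le z).mp hz_lt
    have hzp : z ∉ p := fun hzp => by
      have h0 : inner ℂ (A z) z = 0 :=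
        Submodule.inner_right_of_mem_orthogonal (Submodule.mem_map_of_mem hzp) hz
      simp [h0] at hAz
    have hlt : p < p ⊔ ℂ ∙ z :=
      left_lt_sup.mpr fun h => hzp (h (Submodule.mem_span_singleton_self z))
    exact (Submodule.finrank_lt_finrank_of_lt hlt).not_ge
      (hp_max _ (hp.sup_span_singleton hA hz hAz) inferInstance)
  refine ⟨V, inferInstance, ?_, opNorm_le_bound _ hμ.le fun x => ?_⟩
  · calc (Module.finrank ℂ V : ℝ≥0∞) ≤ Module.finrank ℂ p := by
          exact_mod_cast Submodule.finrank_map_le _ _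
      _ ≤ snCount X μ := finrank_le_snCount ((hgood p).mp hp)
  · calc ‖X (Vᗮ.starProjection x)‖ ≤ μ * ‖Vᗮ.starProjection x‖ :=
          hV _ (Vᗮ.starProjection_apply_mem x)
      _ ≤ μ * ‖x‖ := by gcongr; exact Vᗮ.norm_starProjection_apply_le x

end PositiveSubspaces

section CountBound

open ContinuousLinearMap

variable {H G : Type*} [NormedAddCommGroup H] [InnerProductSpace ℂ H] [CompleteSpace H]
  [NormedAddCommGroup G] [InnerProductSpace ℂ G] [CompleteSpace G]

/-- With `V_L`, `V_C` from `exists_finrank_le_snCount_norm_comp_starProjection_le`,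
`L₁ = L P_{V_Lᗮ}` and `B₁ = U - C P_{V_Cᗮ}`, the operator `L₁† B₁ L₁` has norm `≤ (κ + ε) μ²`
and differs from `L† (U - C) L` by an operator with range in `V_L + L₁† B₁ L (V_L) + L† C (V_C)`. -/
lemma snCount_adjoint_comp_sub_comp_le (L : H →L[ℂ] G) {U C : G →L[ℂ] G} {κ ε μ : ℝ}
    (hU : ‖U‖ ≤ κ) (hε : 0 < ε) (hμ : 0 < μ) :
    snCount (adjoint L ∘L ((U - C) ∘L L)) ((κ + ε) * μ ^ 2)
      ≤ 2 * snCount L μ + snCount C ε := by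
  rcases eq_or_ne (snCount L μ) ⊤ with hL | hL
  · simp [hL]
  rcases eq_or_ne (snCount C ε) ⊤ with hC | hC
  · simp [hC]
  obtain ⟨VL, _, hVL, hL₁⟩ := exists_finrank_le_snCount_norm_comp_starProjection_le L hμ hL
  obtain ⟨VC, _, hVC, hC₁⟩ := exists_finrank_le_snCount_norm_comp_starProjection_le C hε hC
  set P := VL.starProjection
  set Q := VC.starProjection
  set L₁ := L ∘L VLᗮ.starProjection
  set B₁ := U - C ∘L VCᗮ.starProjection
  have hB₁ : ‖B₁‖ ≤ κ + ε := (norm_sub_le _ _).trans (add_le_add hU hC₁)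
  have hK : ‖adjoint L₁ ∘L (B₁ ∘L L₁)‖ ≤ (κ + ε) * μ ^ 2 := by
    calc _ ≤ ‖adjoint L₁‖ * (‖B₁‖ * ‖L₁‖) :=
          (opNorm_comp_le _ _).trans <|
            mul_le_mul_of_nonneg_left (opNorm_comp_le _ _) (norm_nonneg _)
      _ ≤ μ * ((κ + ε) * μ) := by
          rw [LinearIsometryEquiv.norm_map]
          gcongr
          · exact (norm_nonneg _).trans hB₁
      _ = (κ + ε) * μ ^ 2 := by ring
  let f₂ := adjoint L₁ ∘L (B₁ ∘L L)
  let f₃ := adjoint L ∘L C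
  let W := VL ⊔ VL.map (f₂ : H →ₗ[ℂ] H) ⊔ VC.map (f₃ : G →ₗ[ℂ] H)
  have hW : ∀ x, (adjoint L ∘L ((U - C) ∘L L)) x - (adjoint L₁ ∘L (B₁ ∘L L₁)) x ∈ W := by
    intro x
    have hdecomp : (adjoint L ∘L ((U - C) ∘L L)) x - (adjoint L₁ ∘L (B₁ ∘L L₁)) x
        = P (adjoint L (B₁ (L x))) + f₂ (P x) - f₃ (Q (L x)) := by
      simp only [L₁, B₁, f₂, f₃, P, Q, comp_apply, sub_apply, adjoint_comp,
        (isSelfAdjoint_starProjection _).adjoint_eq, Submodule.starProjection_orthogonal_val,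
        map_sub]
      abel
    rw [hdecomp]
    exact sub_mem (add_mem (Submodule.mem_sup_left (Submodule.mem_sup_left
      (VL.starProjection_apply_mem _))) (Submodule.mem_sup_left (Submodule.mem_sup_right
      (Submodule.mem_map_of_mem (VL.starProjection_apply_mem _)))))
      (Submodule.mem_sup_right (Submodule.mem_map_of_mem (VC.starProjection_apply_mem _)))
  have hWrank : Module.finrank ℂ W ≤ 2 * Module.finrank ℂ VL + Module.finrank ℂ VC := by
    simp only [W]
    have h₁ := Submodule.finrank_add_le_finrank_add_finrank (VL ⊔ VL.map (f₂ : H →ₗ[ℂ] H))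
      (VC.map (f₃ : G →ₗ[ℂ] H))
    have h₂ := Submodule.finrank_add_le_finrank_add_finrank VL (VL.map (f₂ : H →ₗ[ℂ] H))
    have h₃ := Submodule.finrank_map_le (f₂ : H →ₗ[ℂ] H) VL
    have h₄ := Submodule.finrank_map_le (f₃ : G →ₗ[ℂ] H) VC
    omega
  calc _ ≤ (Module.finrank ℂ W : ℝ≥0∞) := snCount_le_finrank_of_sub_mem W hK hW
    _ ≤ ((2 * Module.finrank ℂ VL + Module.finrank ℂ VC : ℕ) : ℝ≥0∞) := by exact_mod_cast hWrank
    _ ≤ 2 * snCount L μ + snCount C ε := by push_cast; gcongr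

end CountBound

section Asymptotics

lemma limsup_nhdsGT_zero_le_limsup_comp_mul_sq (f : ℝ → ℝ≥0∞) {c : ℝ} (hc : 0 < c) :
    limsup f (𝓝[>] 0) ≤ limsup (fun μ => f (c * μ ^ 2)) (𝓝[>] 0) := by
  let m : ℝ → ℝ := fun lam => Real.sqrt (lam / c)
  have hm : Tendsto m (𝓝[>] 0) (𝓝[>] 0) := by
    refine tendsto_nhdsWithin_iff.mpr ⟨?_, ?_⟩
    · have hcont : Continuous m := Real.continuous_sqrt.comp (continuous_id.div_const c)
      simpa [m] using hcont.tendsto 0 |>.mono_left nhdsWithin_le_nhds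
    · filter_upwards [self_mem_nhdsWithin] with lam (hlam : 0 < lam)
      exact Real.sqrt_pos.mpr (div_pos hlam hc)
  have hfm : f =ᶠ[𝓝[>] 0] fun lam => f (c * m lam ^ 2) := by
    filter_upwards [self_mem_nhdsWithin] with lam (hlam : 0 < lam)
    rw [Real.sq_sqrt (div_pos hlam hc).le, mul_div_cancel₀ _ hc.ne']
  rw [limsup_congr hfm]
  exact hm.limsup_comp_le_limsup (u := fun μ => f (c * μ ^ 2))

variable {H G H' G' : Type*} [NormedAddCommGroup H] [InnerProductSpace ℂ H]
  [NormedAddCommGroup G] [InnerProductSpace ℂ G] [NormedAddCommGroup H'] [InnerProductSpace ℂ H']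
  [NormedAddCommGroup G'] [InnerProductSpace ℂ G']

lemma nsup_le_of_snCount_le {R : H →L[ℂ] G} {L : H' →L[ℂ] G'} {c θ : ℝ} {k : ℝ≥0∞}
    (hc : 0 < c) (hθ : 0 < θ) (hk : k ≠ ⊤)
    (h : ∀ μ > 0, snCount R (c * μ ^ 2) ≤ 2 * snCount L μ + k) :
    nsup R θ ≤ ENNReal.ofReal (c ^ θ) * (2 * nsup L (2 * θ)) := by
  have hpow : ∀ μ > 0, ENNReal.ofReal ((c * μ ^ 2) ^ θ)
      = ENNReal.ofReal (c ^ θ) * ENNReal.ofReal (μ ^ (2 * θ)) := fun μ hμ => by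
    rw [← ENNReal.ofReal_mul (by positivity), Real.mul_rpow hc.le (by positivity),
      Real.rpow_mul hμ.le, Real.rpow_two]
  have htail : Tendsto (fun μ : ℝ => ENNReal.ofReal ((c * μ ^ 2) ^ θ) * k) (𝓝[>] 0) (𝓝 0) := by
    have hcont : Continuous fun μ : ℝ => (c * μ ^ 2) ^ θ := by fun_prop (disch := positivity)
    have h0 : Tendsto (fun μ : ℝ => ENNReal.ofReal ((c * μ ^ 2) ^ θ)) (𝓝 0) (𝓝 0) := by
      simpa [Function.comp_def, Real.zero_rpow hθ.ne'] using
        (ENNReal.continuous_ofReal.comp hcont).tendsto 0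
    simpa using ENNReal.Tendsto.mul_const (h0.mono_left nhdsWithin_le_nhds) (.inr hk)
  calc nsup R θ
      ≤ limsup (fun μ => ENNReal.ofReal ((c * μ ^ 2) ^ θ) * snCount R (c * μ ^ 2)) (𝓝[>] 0) :=
        limsup_nhdsGT_zero_le_limsup_comp_mul_sq _ hc
    _ ≤ limsup (fun μ => ENNReal.ofReal (c ^ θ) * (2 * (ENNReal.ofReal (μ ^ (2 * θ)) *
          snCount L μ)) + ENNReal.ofReal ((c * μ ^ 2) ^ θ) * k) (𝓝[>] 0) := by
        refine limsup_le_limsup ?_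
        filter_upwards [self_mem_nhdsWithin] with μ (hμ : 0 < μ)
        calc _ ≤ ENNReal.ofReal ((c * μ ^ 2) ^ θ) * (2 * snCount L μ + k) := by gcongr; exact h μ hμ
          _ = _ := by rw [mul_add, hpow μ hμ]; ring
    _ = limsup (fun μ => ENNReal.ofReal (c ^ θ) * (2 * (ENNReal.ofReal (μ ^ (2 * θ)) *
          snCount L μ))) (𝓝[>] 0) := ENNReal.limsup_add_of_right_tendsto_zero htail _
    _ = ENNReal.ofReal (c ^ θ) * (2 * nsup L (2 * θ)) := by
        rw [ENNReal.limsup_const_mul_of_ne_top ENNReal.ofReal_ne_top,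
          ENNReal.limsup_const_mul_of_ne_top ENNReal.ofNat_ne_top]
        rfl

open ContinuousLinearMap in
theorem nsup_adjoint_comp_sub_comp_le [CompleteSpace H] [CompleteSpace G] (L : H →L[ℂ] G)
    {U C : G →L[ℂ] G} {κ θ : ℝ} (hκ : 0 < κ) (hU : ‖U‖ ≤ κ) (hC : IsCompactOperator C) (hθ : 0 < θ) :
    nsup (adjoint L ∘L ((U - C) ∘L L)) θ ≤ ENNReal.ofReal (κ ^ θ) * (2 * nsup L (2 * θ)) := by
  have hε : ∀ ε > 0, nsup (adjoint L ∘L ((U - C) ∘L L)) θ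
      ≤ ENNReal.ofReal ((κ + ε) ^ θ) * (2 * nsup L (2 * θ)) := fun ε hε =>
    nsup_le_of_snCount_le (by positivity) hθ (snCount_ne_top_of_isCompactOperator hC hε)
      fun μ hμ => snCount_adjoint_comp_sub_comp_le L hU hε hμ
  have hlim : Tendsto (fun ε => ENNReal.ofReal ((κ + ε) ^ θ) * (2 * nsup L (2 * θ)))
      (𝓝[>] 0) (𝓝 (ENNReal.ofReal (κ ^ θ) * (2 * nsup L (2 * θ)))) := by
    have hcont : Continuous fun ε : ℝ => ENNReal.ofReal ((κ + ε) ^ θ) :=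
      ENNReal.continuous_ofReal.comp (by fun_prop (disch := exact hθ.le))
    refine ENNReal.Tendsto.mul_const ?_ (.inl (by simp [Real.rpow_pos_of_pos hκ]))
    simpa using (hcont.tendsto 0).mono_left nhdsWithin_le_nhds
  exact ge_of_tendsto hlim (eventually_nhdsWithin_of_forall hε)

end Asymptotics

namespace PerturbationData

open ContinuousLinearMap

variable {H G : Type*} [NormedAddCommGroup H] [InnerProductSpace ℂ H] [CompleteSpace H]
  [NormedAddCommGroup G] [InnerProductSpace ℂ G] [CompleteSpace G]
  {B : BasePerturbation H} (P : PerturbationData (G := G) B)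

/-- `1 + T` is coercive: `re ⟪(1 + T) f, f⟫ ≥ c ‖f‖²` is the positivity assumption on `a + v`. -/
lemma isUnit_one_add_T : IsUnit (1 + P.T) := by
  obtain ⟨c, hc, hpos⟩ := P.pos
  refine isUnit_of_forall_le_norm_inner_map _ (c := ⟨c, hc.le⟩) hc fun f => ?_
  calc ‖f‖ ^ 2 * c ≤ (inner ℂ ((1 + P.T) f) f).re := by
        simp only [P.hT, add_apply, one_apply_eq_self, comp_apply, inner_add_left,
          adjoint_inner_left, Complex.add_re]
        have hf : (inner ℂ f f).re = ‖f‖ ^ 2 := inner_self_eq_norm_sq (𝕜 := ℂ) f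
        rw [hf]
        linarith [hpos f]
    _ ≤ ‖inner ℂ ((1 + P.T) f) f‖ := Complex.re_le_norm _

/-- With `Φ = (1 + T)⁻¹` one has `A^{-1} - A_V^{-1} = A^{-1/2} (1 - Φ) A^{-1/2}` and
`1 - Φ = T - T Φ T`, so `C = U S Φ S† U`. -/
lemma exists_resolvent_difference_eq (hS : IsCompactOperator P.S) :
    ∃ C : G →L[ℂ] G, IsCompactOperator C ∧ B.sqrtAinv.comp B.sqrtAinv - P.AVinv
      = adjoint (P.S.comp B.sqrtAinv) ∘L ((P.U - C) ∘L P.S.comp B.sqrtAinv) := by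
  obtain ⟨M, hM⟩ := P.isUnit_one_add_T
  set Φ : H →L[ℂ] H := ↑M⁻¹
  have hΦT : Φ * P.T = 1 - Φ := by
    rw [eq_sub_iff_add_eq, add_comm, ← mul_one_add, ← hM, M.inv_mul]
  have hTΦ : P.T * Φ = 1 - Φ := by
    rw [eq_sub_iff_add_eq, ← add_one_mul, add_comm, ← hM, M.mul_inv]
  have hX : P.X = Φ * B.sqrtAinv := by
    rw [← P.hX, ← hM, ← mul_def, ← mul_assoc, M.inv_mul, one_mul]
  have hΦ : 1 - Φ = P.T - P.T * Φ * P.T := by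
    rw [mul_assoc, hΦT, mul_sub, mul_one, hTΦ]
    abel
  refine ⟨P.U ∘L P.S ∘L Φ ∘L adjoint P.S ∘L P.U, (hS.comp_clm _).clm_comp P.U, ?_⟩
  calc B.sqrtAinv.comp B.sqrtAinv - P.AVinv = B.sqrtAinv * (1 - Φ) * B.sqrtAinv := by
        rw [P.hAVinv, hX, ← mul_def, ← mul_def]
        noncomm_ring
    _ = _ := by
        rw [hΦ, P.hT, adjoint_comp, B.sqrtAinv_sa.adjoint_eq]
        ext x
        simp [map_sub]

end PerturbationData

theorem nsup_resolvent_difference_le_general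
    {H : Type*} {G : Type*}
    [NormedAddCommGroup H] [InnerProductSpace ℂ H] [CompleteSpace H]
    [NormedAddCommGroup G] [InnerProductSpace ℂ G] [CompleteSpace G]
    (B : BasePerturbation H) (P : PerturbationData (G := G) B)
    (θ : ℝ) (hθ : 0 < θ) (𝔪 : ℝ≥0∞)
    (hU : ‖P.U‖ ≤ 1) (hS : IsCompactOperator P.S)
    (hsn : nsup (P.S.comp B.sqrtAinv) (2 * θ) = 𝔪) :
    nsup (B.sqrtAinv.comp B.sqrtAinv - P.AVinv) θ ≤ 2 * 𝔪 := by
  obtain ⟨C, hC, hRV⟩ := P.exists_resolvent_difference_eq hS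
  rw [hRV]
  calc _ ≤ ENNReal.ofReal (1 ^ θ) * (2 * nsup (P.S.comp B.sqrtAinv) (2 * θ)) :=
        nsup_adjoint_comp_sub_comp_le _ one_pos hU hC hθ
    _ = 2 * 𝔪 := by rw [Real.one_rpow, ENNReal.ofReal_one, one_mul, hsn]

/-- In the abstract perturbation setting, suppose that `‖U‖ ≤ 1`,
that the operator `F γ A^{-1/2} : H → G` is compact, and that for some `θ > 0` the
singular number bound `n^sup(F γ A^{-1}, 2θ) = 𝔪 < ∞` holds.  Then the resolvent
difference `R_V = A^{-1} - (A_V)^{-1}` satisfies `n^sup(R_V, θ) ≤ 2 𝔪`. -/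
theorem nsup_resolvent_difference_le
    {H : Type*} {G : Type*}
    [NormedAddCommGroup H] [InnerProductSpace ℂ H] [CompleteSpace H]
    [NormedAddCommGroup G] [InnerProductSpace ℂ G] [CompleteSpace G]
    (B : BasePerturbation H) (P : PerturbationData (G := G) B)
    (θ : ℝ) (hθ : 0 < θ) (𝔪 : ℝ≥0∞) (h𝔪 : 𝔪 ≠ ⊤)
    (hU : ‖P.U‖ ≤ 1) (hS : IsCompactOperator P.S)
    (hsn : nsup (P.S.comp B.sqrtAinv) (2 * θ) = 𝔪) :
    nsup (B.sqrtAinv.comp B.sqrtAinv - P.AVinv) θ ≤ 2 * 𝔪 :=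
  nsup_resolvent_difference_le_general B P θ hθ 𝔪 hU hS hsn

end SingPert
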